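/- Let f be integrable in the generalized sense on [0,∞[ with coefficient f_{−1} of r^{−1} at 0. Then for every α > 0, gen∫₀^∞ f(αu) α du = gen∫₀^∞ f(r) dr − f_{−1} ln α. In particular, the generalized integral is scaling invariant if and only if f_{−1} = 0. -/

import Mathlib

open MeasureTheory Set Complex Real

/-- The generalized integral of `f` over `[0,∞[` with respect to the data
`(Ω, c)` of homogeneous terms `c k * r ^ k`, `k ∈ Ω`, at `0`. -/
noncomputable def genInt (f : ℝ → ℂ) (Ω : Finset ℂ) (c : ℂ → ℂ) : ℂ :=
  (∑ k ∈ Ω, if k = -1 then 0 else c k / (k + 1))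
  + (∫ r in Ioo (0:ℝ) 1, (f r - ∑ k ∈ Ω, c k * (r : ℂ) ^ k))
  + ∫ r in Ioi (1:ℝ), f r

/-- `f` is integrable in the generalized sense with data `(Ω, c)`:
it is integrable on `]1,∞[` and, after subtracting the homogeneous terms,
integrable on `]0,1[`. -/
def GenIntegrable (f : ℝ → ℂ) (Ω : Finset ℂ) (c : ℂ → ℂ) : Prop :=
  IntegrableOn f (Ioi 1) ∧
  IntegrableOn (fun r => f r - ∑ k ∈ Ω, c k * (r : ℂ) ^ k) (Ioo 0 1)

/-!
The generalized integral does not depend on the data `(Ω, c)`: the difference of two admissible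
homogeneous parts is a sum `∑ d k * r ^ k` integrable on `]0,1[`, and such a sum is integrable only
if `d k = 0` whenever `k.re ≤ -1`. (Weight it by `r ^ (-1 - k₀)` for `k₀` of least real part:
over `[ε,1]` the `k₀` term integrates to `d k₀ * log (1/ε)` while all others stay bounded.)
Nor does it depend on where `[0,∞[` is cut, once the homogeneous terms are integrated with the
primitive `cpowPrimitive`. The substitution `r = α u` turns the data `(Ω, c)` of `f` into
`(Ω, c k * α ^ (k + 1))` for `u ↦ α f (α u)` and the cut at `1` into the cut at `α`; only the
primitive `log` of `r⁻¹` is not homogeneous, and it produces the term `c (-1) * log α`.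
-/
noncomputable def powSum (S : Finset ℂ) (d : ℂ → ℂ) (r : ℝ) : ℂ := ∑ k ∈ S, d k * (r : ℂ) ^ k

noncomputable def cpowPrimitive (k : ℂ) (a : ℝ) : ℂ :=
  if k = -1 then Real.log a else (a : ℂ) ^ (k + 1) / (k + 1)

lemma zero_notMem_uIcc_of_pos {a b : ℝ} (ha : 0 < a) (hb : 0 < b) : (0 : ℝ) ∉ uIcc a b :=
  fun h => (lt_min ha hb).not_ge h.1

lemma integral_cpow_eq_sub_cpowPrimitive {a b : ℝ} (ha : 0 < a) (hb : 0 < b) (k : ℂ) :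
    ∫ r in a..b, (r : ℂ) ^ k = cpowPrimitive k b - cpowPrimitive k a := by
  unfold cpowPrimitive
  split_ifs with hk
  · subst hk
    have h : ∀ r ∈ uIcc a b, (r : ℂ) ^ (-1 : ℂ) = ((r⁻¹ : ℝ) : ℂ) := fun r _ => by
      simp [Complex.cpow_neg_one]
    rw [intervalIntegral.integral_congr h, intervalIntegral.integral_ofReal,
      integral_inv_of_pos ha hb, Real.log_div hb.ne' ha.ne', Complex.ofReal_sub]
  · rw [integral_cpow (Or.inr ⟨hk, zero_notMem_uIcc_of_pos ha hb⟩), sub_div]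

lemma cpowPrimitive_mul {α a : ℝ} (hα : 0 < α) (ha : 0 < a) (k : ℂ) :
    cpowPrimitive k (α * a) =
      (α : ℂ) ^ (k + 1) * cpowPrimitive k a + if k = -1 then (Real.log α : ℂ) else 0 := by
  unfold cpowPrimitive
  split_ifs with hk
  · subst hk
    simp [Real.log_mul hα.ne' ha.ne', add_comm]
  · rw [Complex.ofReal_mul, Complex.mul_cpow_ofReal_nonneg hα.le ha.le]; ring

lemma integral_cpow_zero_one {k : ℂ} (hk : -1 < k.re) :
    ∫ r in (0 : ℝ)..1, (r : ℂ) ^ k = cpowPrimitive k 1 := by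
  have hk1 : k ≠ -1 := by rintro rfl; norm_num at hk
  rw [integral_cpow (Or.inl hk), cpowPrimitive, if_neg hk1]
  have : k + 1 ≠ 0 := by rwa [Ne, add_eq_zero_iff_eq_neg]
  simp [Complex.zero_cpow this]

lemma continuousOn_powSum (S : Finset ℂ) (d : ℂ → ℂ) : ContinuousOn (powSum S d) {0}ᶜ :=
  continuousOn_finsetSum S fun k _ => continuousOn_const.mul fun r hr =>
    (continuousAt_ofReal_cpow_const r k (Or.inr hr)).continuousWithinAt

lemma intervalIntegrable_powSum {a b : ℝ} (ha : 0 < a) (hb : 0 < b) (S : Finset ℂ) (d : ℂ → ℂ) :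
    IntervalIntegrable (powSum S d) volume a b :=
  ((continuousOn_powSum S d).mono
    (subset_compl_singleton_iff.mpr (zero_notMem_uIcc_of_pos ha hb))).intervalIntegrable

lemma integral_powSum {a b : ℝ} (ha : 0 < a) (hb : 0 < b) (S : Finset ℂ) (d : ℂ → ℂ) :
    ∫ r in a..b, powSum S d r = ∑ k ∈ S, d k * (cpowPrimitive k b - cpowPrimitive k a) := by
  unfold powSum
  rw [intervalIntegral.integral_finsetSum fun k _ =>
    (intervalIntegral.intervalIntegrable_cpow
      (Or.inr (zero_notMem_uIcc_of_pos ha hb))).const_mul (d k)]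
  simp only [intervalIntegral.integral_const_mul, integral_cpow_eq_sub_cpowPrimitive ha hb]

lemma powSum_comp_mul_left {α u : ℝ} (hα : 0 < α) (hu : 0 ≤ u) (S : Finset ℂ) (c : ℂ → ℂ) :
    (α : ℂ) * powSum S c (α * u) = powSum S (fun k => c k * (α : ℂ) ^ (k + 1)) u := by
  have hα' : (α : ℂ) ≠ 0 := by exact_mod_cast hα.ne'
  simp only [powSum, Finset.mul_sum, Complex.ofReal_mul,
    Complex.mul_cpow_ofReal_nonneg hα.le hu, Complex.cpow_add _ _ hα', Complex.cpow_one]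
  exact Finset.sum_congr rfl fun k _ => by ring

lemma eq_zero_of_forall_mul_neg_log_le {a B : ℝ} (ha : 0 ≤ a)
    (h : ∀ ε ∈ Ioo (0 : ℝ) 1, a * -Real.log ε ≤ B) : a = 0 := by
  by_contra ha0
  have ha' : 0 < a := lt_of_le_of_ne ha (Ne.symm ha0)
  have hB : 0 < (|B| + 1) / a := by positivity
  have hε : Real.exp (-((|B| + 1) / a)) ∈ Ioo (0 : ℝ) 1 :=
    ⟨Real.exp_pos _, Real.exp_lt_one_iff.mpr (neg_lt_zero.mpr hB)⟩
  have := h _ hε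
  rw [Real.log_exp, neg_neg, mul_div_cancel₀ _ ha'.ne'] at this
  linarith [le_abs_self B]

lemma norm_integral_cpow_sub_one_le {j : ℂ} (hj : j ≠ 0) (hre : 0 ≤ j.re) {ε : ℝ}
    (hε : 0 < ε) (hε1 : ε ≤ 1) : ‖∫ r in ε..1, (r : ℂ) ^ (j - 1)‖ ≤ 2 / ‖j‖ := by
  have hj1 : j - 1 ≠ -1 := fun h => hj (by linear_combination h)
  rw [integral_cpow (Or.inr ⟨hj1, zero_notMem_uIcc_of_pos hε one_pos⟩), sub_add_cancel, norm_div]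
  gcongr
  calc ‖((1 : ℝ) : ℂ) ^ j - (ε : ℂ) ^ j‖ ≤ ‖((1 : ℝ) : ℂ) ^ j‖ + ‖(ε : ℂ) ^ j‖ := norm_sub_le _ _
    _ ≤ 1 + 1 := by
      gcongr
      · simp
      · rw [norm_cpow_eq_rpow_re_of_pos hε]
        exact Real.rpow_le_one hε.le hε1 hre
    _ = 2 := one_add_one_eq_two

lemma coeff_eq_zero_of_re_le_of_forall_re_le {S : Finset ℂ} {d : ℂ → ℂ} {k₀ : ℂ}
    (h : IntervalIntegrable (powSum S d) volume 0 1) (hk₀ : k₀ ∈ S) (hre : k₀.re ≤ -1)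
    (hmin : ∀ k ∈ S, k₀.re ≤ k.re) : d k₀ = 0 := by
  set C := ∫ r in (0 : ℝ)..1, ‖powSum S d r‖
  set D := ∑ k ∈ S.erase k₀, ‖d k‖ * (2 / ‖k - k₀‖)
  refine norm_eq_zero.mp (eq_zero_of_forall_mul_neg_log_le (B := C + D) (norm_nonneg _)
    fun ε hε => ?_)
  obtain ⟨hε0, hε1⟩ : 0 < ε ∧ ε ≤ 1 := ⟨hε.1, hε.2.le⟩
  have hpos : ∀ r ∈ uIcc ε 1, 0 < r := fun r hr => hε0.trans_le (uIcc_of_le hε1 ▸ hr).1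
  have hexp : ∫ r in ε..1, powSum S d r * (r : ℂ) ^ (-1 - k₀)
      = d k₀ * (-Real.log ε : ℝ)
        + ∑ k ∈ S.erase k₀, d k * ∫ r in ε..1, (r : ℂ) ^ ((k - k₀) - 1) := by
    have hcongr : ∀ r ∈ uIcc ε 1, powSum S d r * (r : ℂ) ^ (-1 - k₀)
        = ∑ k ∈ S, d k * (r : ℂ) ^ ((k - k₀) - 1) := fun r hr => by
      have hr0 : (r : ℂ) ≠ 0 := by exact_mod_cast (hpos r hr).ne'
      simp only [powSum, Finset.sum_mul, mul_assoc, ← Complex.cpow_add _ _ hr0]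
      exact Finset.sum_congr rfl fun k _ => by ring_nf
    rw [intervalIntegral.integral_congr hcongr, intervalIntegral.integral_finsetSum fun k _ =>
      (intervalIntegral.intervalIntegrable_cpow
        (Or.inr (zero_notMem_uIcc_of_pos hε0 one_pos))).const_mul _,
      ← Finset.add_sum_erase S _ hk₀]
    simp [integral_cpow_eq_sub_cpowPrimitive hε0 one_pos, cpowPrimitive]
  have hmain : ‖∫ r in ε..1, powSum S d r * (r : ℂ) ^ (-1 - k₀)‖ ≤ C := by
    have hnorm := h.norm
    calc _ ≤ ∫ r in ε..1, ‖powSum S d r‖ := by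
          refine intervalIntegral.norm_integral_le_of_norm_le hε1 (ae_of_all _ fun r hr => ?_)
            (hnorm.mono_set (uIcc_subset_uIcc (mem_uIcc_of_le hε0.le hε1) right_mem_uIcc))
          have hr0 : 0 < r := hε0.trans hr.1
          rw [norm_mul, norm_cpow_eq_rpow_re_of_pos hr0]
          refine mul_le_of_le_one_right (norm_nonneg _) (Real.rpow_le_one hr0.le hr.2 ?_)
          simp only [Complex.sub_re, Complex.neg_re, Complex.one_re]
          linarith
      _ ≤ C := intervalIntegral.integral_mono_interval hε0.le hε1 le_rfl
          (ae_of_all _ fun _ => norm_nonneg _) hnorm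
  have hrest : ‖∑ k ∈ S.erase k₀, d k * ∫ r in ε..1, (r : ℂ) ^ ((k - k₀) - 1)‖ ≤ D := by
    refine (norm_sum_le _ _).trans (Finset.sum_le_sum fun k hk => ?_)
    rw [norm_mul]
    gcongr
    refine norm_integral_cpow_sub_one_le (sub_ne_zero.mpr (Finset.ne_of_mem_erase hk)) ?_ hε0 hε1
    simpa using hmin k (Finset.mem_of_mem_erase hk)
  have hlog : 0 ≤ -Real.log ε := neg_nonneg.mpr (Real.log_nonpos hε0.le hε1)
  calc ‖d k₀‖ * -Real.log ε = ‖d k₀ * (-Real.log ε : ℝ)‖ := by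
        rw [norm_mul, Complex.norm_real, Real.norm_of_nonneg hlog]
    _ = ‖(∫ r in ε..1, powSum S d r * (r : ℂ) ^ (-1 - k₀))
          - ∑ k ∈ S.erase k₀, d k * ∫ r in ε..1, (r : ℂ) ^ ((k - k₀) - 1)‖ := by
        rw [hexp, add_sub_cancel_right]
    _ ≤ C + D := (norm_sub_le _ _).trans (add_le_add hmain hrest)

lemma coeff_eq_zero_of_intervalIntegrable_powSum {S : Finset ℂ} {d : ℂ → ℂ} {k : ℂ}
    (h : IntervalIntegrable (powSum S d) volume 0 1) (hk : k ∈ S) (hre : k.re ≤ -1) :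
    d k = 0 := by
  classical
  by_contra hdk
  have hk' : k ∈ S.filter (d · ≠ 0) := Finset.mem_filter.mpr ⟨hk, hdk⟩
  have hS : powSum (S.filter (d · ≠ 0)) d = powSum S d :=
    funext fun r => Finset.sum_filter_of_ne fun j _ hj => left_ne_zero_of_mul hj
  obtain ⟨k₀, hk₀, hmin⟩ := (S.filter (d · ≠ 0)).exists_min_image Complex.re ⟨k, hk'⟩
  exact (Finset.mem_filter.mp hk₀).2 (coeff_eq_zero_of_re_le_of_forall_re_le (hS ▸ h) hk₀
    ((hmin k hk').trans hre) hmin)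

lemma integral_powSum_zero_one {S : Finset ℂ} {d : ℂ → ℂ}
    (h : IntervalIntegrable (powSum S d) volume 0 1) :
    ∫ r in (0 : ℝ)..1, powSum S d r = ∑ k ∈ S, d k * cpowPrimitive k 1 := by
  have hterm : ∀ k ∈ S, d k = 0 ∨ -1 < k.re := fun k hk =>
    (le_or_gt k.re (-1)).imp (coeff_eq_zero_of_intervalIntegrable_powSum h hk) id
  unfold powSum
  rw [intervalIntegral.integral_finsetSum fun k hk => ?_]
  · refine Finset.sum_congr rfl fun k hk => ?_
    rcases hterm k hk with h0 | hre
    · simp [h0]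
    · rw [intervalIntegral.integral_const_mul, integral_cpow_zero_one hre]
  · rcases hterm k hk with h0 | hre
    · simp [h0]
    · exact (intervalIntegral.intervalIntegrable_cpow' hre).const_mul _

lemma genIntegrable_iff {f : ℝ → ℂ} {Ω : Finset ℂ} {c : ℂ → ℂ} :
    GenIntegrable f Ω c ↔ IntegrableOn f (Ioi 1) ∧
      IntervalIntegrable (fun r => f r - powSum Ω c r) volume 0 1 :=
  and_congr_right' (intervalIntegrable_iff_integrableOn_Ioo_of_le zero_le_one).symm

namespace GenIntegrable

variable {f : ℝ → ℂ} {Ω : Finset ℂ} {c : ℂ → ℂ}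

lemma intervalIntegrable_sub_powSum_zero_one (hf : GenIntegrable f Ω c) :
    IntervalIntegrable (fun r => f r - powSum Ω c r) volume 0 1 :=
  (genIntegrable_iff.mp hf).2

lemma intervalIntegrable_one {b : ℝ} (hf : GenIntegrable f Ω c) (hb : 0 < b) :
    IntervalIntegrable f volume 1 b := by
  rcases le_total 1 b with h | h
  · exact (intervalIntegrable_iff_integrableOn_Ioo_of_le h).mpr
      (hf.1.mono_set Ioo_subset_Ioi_self)
  · have hF := hf.intervalIntegrable_sub_powSum_zero_one.mono_set
      (uIcc_subset_uIcc_right (mem_uIcc_of_le hb.le h))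
    simpa using (hF.add (intervalIntegrable_powSum hb one_pos Ω c)).symm

lemma intervalIntegrable {a b : ℝ} (hf : GenIntegrable f Ω c) (ha : 0 < a) (hb : 0 < b) :
    IntervalIntegrable f volume a b :=
  (hf.intervalIntegrable_one ha).symm.trans (hf.intervalIntegrable_one hb)

lemma integrableOn_Ioi {a : ℝ} (hf : GenIntegrable f Ω c) (ha : 0 < a) :
    IntegrableOn f (Ioi a) := by
  have hcover : Ioi a ⊆ uIoc a 1 ∪ Ioi 1 := fun x hx => by
    by_cases hx1 : x ≤ 1
    · exact Or.inl (Ioc_subset_uIoc ⟨hx, hx1⟩)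
    · exact Or.inr (not_le.mp hx1)
  exact ((hf.intervalIntegrable ha one_pos).def'.union hf.1).mono_set hcover

lemma intervalIntegrable_sub_powSum {b : ℝ} (hf : GenIntegrable f Ω c) (hb : 0 < b) :
    IntervalIntegrable (fun r => f r - powSum Ω c r) volume 0 b :=
  hf.intervalIntegrable_sub_powSum_zero_one.trans
    ((hf.intervalIntegrable_one hb).sub (intervalIntegrable_powSum one_pos hb Ω c))

end GenIntegrable

/-- `genInt` with the cut between the two integrals at `a` instead of `1`. -/
noncomputable def genIntAt (f : ℝ → ℂ) (Ω : Finset ℂ) (c : ℂ → ℂ) (a : ℝ) : ℂ :=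
  (∑ k ∈ Ω, c k * cpowPrimitive k a) + (∫ r in (0 : ℝ)..a, (f r - powSum Ω c r))
    + ∫ r in Ioi a, f r

lemma genIntAt_one (f : ℝ → ℂ) (Ω : Finset ℂ) (c : ℂ → ℂ) : genIntAt f Ω c 1 = genInt f Ω c := by
  have hcoeff : ∀ k, c k * cpowPrimitive k 1 = if k = -1 then 0 else c k / (k + 1) := fun k => by
    unfold cpowPrimitive; split_ifs <;> simp [div_eq_mul_inv]
  simp only [genIntAt, genInt, hcoeff, intervalIntegral.integral_of_le zero_le_one,
    integral_Ioc_eq_integral_Ioo, powSum]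

lemma GenIntegrable.genInt_eq {g : ℝ → ℂ} {Ω Ω' : Finset ℂ} {c c' : ℂ → ℂ}
    (h : GenIntegrable g Ω c) (h' : GenIntegrable g Ω' c') :
    genInt g Ω c = genInt g Ω' c' := by
  classical
  set d : ℂ → ℂ := fun k => (if k ∈ Ω then c k else 0) - (if k ∈ Ω' then c' k else 0)
  have hsum : ∀ φ : ℂ → ℂ,
      ∑ k ∈ Ω ∪ Ω', d k * φ k = ∑ k ∈ Ω, c k * φ k - ∑ k ∈ Ω', c' k * φ k := fun φ => by
    simp only [d, sub_mul, ite_mul, zero_mul, Finset.sum_sub_distrib, Finset.sum_ite_mem,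
      Finset.union_inter_cancel_left, Finset.union_inter_cancel_right]
  have hP : powSum (Ω ∪ Ω') d = fun r => (g r - powSum Ω' c' r) - (g r - powSum Ω c r) :=
    funext fun r => by simp only [powSum, hsum]; ring
  have hF := h.intervalIntegrable_sub_powSum_zero_one
  have hF' := h'.intervalIntegrable_sub_powSum_zero_one
  have hval := integral_powSum_zero_one (hP ▸ hF'.sub hF)
  rw [hsum, hP, intervalIntegral.integral_sub hF' hF] at hval
  rw [← genIntAt_one, ← genIntAt_one]
  unfold genIntAt
  linear_combination -hval

lemma GenIntegrable.genIntAt_eq {f : ℝ → ℂ} {Ω : Finset ℂ} {c : ℂ → ℂ} {a b : ℝ}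
    (hf : GenIntegrable f Ω c) (ha : 0 < a) (hb : 0 < b) :
    genIntAt f Ω c a = genIntAt f Ω c b := by
  have hsplit := intervalIntegral.integral_add_adjacent_intervals
    (hf.intervalIntegrable_sub_powSum ha)
    ((hf.intervalIntegrable_sub_powSum ha).symm.trans (hf.intervalIntegrable_sub_powSum hb))
  have hsub := intervalIntegral.integral_sub (hf.intervalIntegrable ha hb)
    (intervalIntegrable_powSum ha hb Ω c)
  have htail := intervalIntegral.integral_interval_add_Ioi (hf.integrableOn_Ioi ha)
    (hf.integrableOn_Ioi hb)
  have hpow := integral_powSum ha hb Ω c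
  simp only [mul_sub, Finset.sum_sub_distrib] at hpow
  unfold genIntAt
  linear_combination hsplit - hsub - htail + hpow

section Scaling

variable {f : ℝ → ℂ} {Ω : Finset ℂ} {c : ℂ → ℂ} {α : ℝ}

lemma GenIntegrable.comp_mul_left (hf : GenIntegrable f Ω c) (hα : 0 < α) :
    GenIntegrable (fun u => (α : ℂ) * f (α * u)) Ω (fun k => c k * (α : ℂ) ^ (k + 1)) := by
  refine genIntegrable_iff.mpr ⟨?_, ?_⟩
  · refine Integrable.const_mul ?_ _
    exact (integrableOn_Ioi_comp_mul_left_iff f 1 hα).mpr (by simpa using hf.integrableOn_Ioi hα)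
  · have h := ((hf.intervalIntegrable_sub_powSum hα).comp_mul_left (c := α)).const_mul (α : ℂ)
    rw [zero_div, div_self hα.ne'] at h
    refine h.congr fun u hu => ?_
    rw [uIoc_of_le zero_le_one] at hu
    simp only [← powSum_comp_mul_left hα hu.1.le]
    ring

lemma genIntAt_comp_mul_left (hα : 0 < α) :
    genIntAt (fun u => (α : ℂ) * f (α * u)) Ω (fun k => c k * (α : ℂ) ^ (k + 1)) 1
      = genIntAt f Ω c α - (if (-1 : ℂ) ∈ Ω then c (-1) else 0) * Real.log α := by
  have hcoeff : ∑ k ∈ Ω, c k * (α : ℂ) ^ (k + 1) * cpowPrimitive k 1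
      = ∑ k ∈ Ω, c k * cpowPrimitive k α - (if (-1 : ℂ) ∈ Ω then c (-1) else 0) * Real.log α := by
    have hterm : ∀ k, c k * (α : ℂ) ^ (k + 1) * cpowPrimitive k 1
        = c k * cpowPrimitive k α - if k = -1 then c k * Real.log α else 0 := fun k => by
      rw [← mul_one α, cpowPrimitive_mul hα one_pos, mul_one]
      split_ifs <;> ring
    rw [Finset.sum_congr rfl fun k _ => hterm k, Finset.sum_sub_distrib, Finset.sum_ite_eq',
      ite_zero_mul]
  have hbody : ∫ u in (0 : ℝ)..1,
        ((α : ℂ) * f (α * u) - powSum Ω (fun k => c k * (α : ℂ) ^ (k + 1)) u)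
      = ∫ r in (0 : ℝ)..α, (f r - powSum Ω c r) := by
    rw [intervalIntegral.integral_congr (g := fun u => α • (f (α * u) - powSum Ω c (α * u)))]
    · rw [intervalIntegral.integral_smul, intervalIntegral.smul_integral_comp_mul_left
        (fun r => f r - powSum Ω c r), mul_zero, mul_one]
    · intro u hu
      rw [uIcc_of_le zero_le_one] at hu
      simp only [← powSum_comp_mul_left hα hu.1, Complex.real_smul]
      ring
  have htail : ∫ u in Ioi (1 : ℝ), (α : ℂ) * f (α * u) = ∫ r in Ioi α, f r := by
    simp_rw [← Complex.real_smul]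
    rw [integral_smul, integral_comp_mul_left_Ioi' f 1 hα, mul_one]
  rw [genIntAt, hcoeff, hbody, htail, genIntAt]
  ring

end Scaling

theorem genInt_scaling (f : ℝ → ℂ) (Ω : Finset ℂ) (c : ℂ → ℂ)
    (α : ℝ) (hα : 0 < α) (hf : GenIntegrable f Ω c)
    (Ω' : Finset ℂ) (c' : ℂ → ℂ)
    (hg : GenIntegrable (fun u => (α : ℂ) * f (α * u)) Ω' c') :
    genInt (fun u => (α : ℂ) * f (α * u)) Ω' c'
      = genInt f Ω c - (if (-1 : ℂ) ∈ Ω then c (-1) else 0) * Real.log α := by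
  rw [hg.genInt_eq (hf.comp_mul_left hα), ← genIntAt_one, genIntAt_comp_mul_left hα,
    hf.genIntAt_eq hα one_pos, genIntAt_one]
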